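/- arXiv:math/9901017 — 5 statements merged into one kernel-verified Lean document; each statement's English description precedes it below -/
import Mathlib

section
/- The intersection of a pre-I-open set with an open set is pre-I-open. -/
open Set

variable {X : Type*}

def LocalFun [TopologicalSpace X] (I : Set (Set X)) (A : Set X) : Set X :=
  {x | ∀ U : Set X, IsOpen U → x ∈ U → U ∩ A ∉ I}

def IsSetIdeal {X : Type*} (I : Set (Set X)) : Prop :=
  ∅ ∈ I ∧ (∀ ⦃A B : Set X⦄, A ∈ I → B ⊆ A → B ∈ I) ∧
    ∀ ⦃A B : Set X⦄, A ∈ I → B ∈ I → A ∪ B ∈ I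

theorem localFun_inter_subset_localFun_inter_of_isOpen [TopologicalSpace X]
    (I : Set (Set X)) {A U : Set X} (hU : IsOpen U) :
    LocalFun I A ∩ U ⊆ LocalFun I (A ∩ U) := by
  rintro x ⟨hx, hxU⟩ V hV hxV
  rw [← inter_assoc, inter_right_comm]
  exact hx (V ∩ U) (hV.inter hU) ⟨hxV, hxU⟩

theorem preIOpen_inter_open_general [TopologicalSpace X] (I : Set (Set X))
    (A U : Set X) (hA : A ⊆ interior (A ∪ LocalFun I A)) (hU : IsOpen U) :
    A ∩ U ⊆ interior ((A ∩ U) ∪ LocalFun I (A ∩ U)) :=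
  calc A ∩ U ⊆ interior (A ∪ LocalFun I A) ∩ U := inter_subset_inter_left U hA
    _ = interior ((A ∪ LocalFun I A) ∩ U) := by rw [interior_inter, hU.interior_eq]
    _ ⊆ interior ((A ∩ U) ∪ LocalFun I (A ∩ U)) := by
      rw [union_inter_distrib_right]
      exact interior_mono (union_subset_union_right _
        (localFun_inter_subset_localFun_inter_of_isOpen I hU))

theorem preIOpen_inter_open [TopologicalSpace X] (I : Set (Set X)) (hI : IsSetIdeal I)
    (A U : Set X) (hA : A ⊆ interior (A ∪ LocalFun I A)) (hU : IsOpen U) :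
    A ∩ U ⊆ interior ((A ∩ U) ∪ LocalFun I (A ∩ U)) :=
  preIOpen_inter_open_general I A U hA hU
end

section
/- If (X,τ) is submaximal, then for any ideal I on X, the pre-I-open sets are exactly the open sets. -/
open Set

variable {X : Type*}

/-! Since `∅ ∈ I`, the local function satisfies `A* ⊆ cl A`, so a pre-I-open set is preopen:
`A ⊆ int (cl A)`. In a submaximal space the dense set `A ∪ (cl A)ᶜ` is open, and its intersection
with `int (cl A)` is `A`. -/

section

variable [TopologicalSpace X]

theorem localFun_subset_closure {I : Set (Set X)} (hI : ∅ ∈ I) (A : Set X) :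
    LocalFun I A ⊆ closure A := by
  intro x hx
  rw [mem_closure_iff]
  intro U hU hxU
  rw [nonempty_iff_ne_empty]
  intro hempty
  exact hx U hU hxU (hempty ▸ hI)

theorem subset_interior_closure_of_subset_interior_union_localFun {I : Set (Set X)}
    (hI : ∅ ∈ I) {A : Set X} (hA : A ⊆ interior (A ∪ LocalFun I A)) :
    A ⊆ interior (closure A) :=
  hA.trans (interior_mono (union_subset subset_closure (localFun_subset_closure hI A)))

theorem dense_union_compl_closure (A : Set X) : Dense (A ∪ (closure A)ᶜ) := by
  intro x
  by_cases hx : x ∈ closure A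
  · exact closure_mono subset_union_left hx
  · exact subset_closure (Or.inr hx)

theorem union_compl_closure_inter_interior_closure {A : Set X}
    (hA : A ⊆ interior (closure A)) : (A ∪ (closure A)ᶜ) ∩ interior (closure A) = A := by
  apply Subset.antisymm
  · rintro x ⟨hxA | hxA, hx⟩
    · exact hxA
    · exact absurd (interior_subset hx) hxA
  · exact subset_inter subset_union_left hA

theorem isOpen_of_subset_interior_closure (hsub : ∀ D : Set X, Dense D → IsOpen D)
    {A : Set X} (hA : A ⊆ interior (closure A)) : IsOpen A := by
  rw [← union_compl_closure_inter_interior_closure hA]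
  exact (hsub _ (dense_union_compl_closure A)).inter isOpen_interior

end

theorem submaximal_preIOpen_eq_open [TopologicalSpace X]
    (hsub : ∀ D : Set X, Dense D → IsOpen D) (I : Set (Set X)) (hI : IsSetIdeal I)
    (A : Set X) : A ⊆ interior (A ∪ LocalFun I A) ↔ IsOpen A :=
  ⟨fun h => isOpen_of_subset_interior_closure hsub
      (subset_interior_closure_of_subset_interior_union_localFun hI.1 h),
    fun h => interior_maximal subset_union_left h⟩
end

section
/- A set A is I-open if and only if A is pre-I-open and ⋆-dense-in-itself (i.e. A ⊆ A*). -/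
open Set

variable {X : Type*}

theorem iOpen_iff_preIOpen_and_starDense [TopologicalSpace X] (I : Set (Set X))
    (A : Set X) : A ⊆ interior (LocalFun I A) ↔
      (A ⊆ interior (A ∪ LocalFun I A) ∧ A ⊆ LocalFun I A) := by
  constructor
  · intro hIOpen
    exact ⟨hIOpen.trans (interior_mono subset_union_right), hIOpen.trans interior_subset⟩
  · rintro ⟨hPreIOpen, hDense⟩
    rwa [union_eq_self_of_subset_left hDense] at hPreIOpen
end

section
/- A function f : X → Y between topological spaces (with an ideal I on X) is I-continuous if and only if it is pre-I-continuous and ⋆-I-continuous. -/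
open Set

variable {X : Type*}

theorem subset_interior_iff_subset_interior_union_and_subset [TopologicalSpace X]
    {A B : Set X} : A ⊆ interior B ↔ A ⊆ interior (A ∪ B) ∧ A ⊆ B := by
  refine ⟨fun h => ⟨h.trans (interior_mono subset_union_right), h.trans interior_subset⟩, ?_⟩
  rintro ⟨h, hAB⟩
  rwa [union_eq_right.mpr hAB] at h

theorem iContinuous_iff {Y : Type*} [TopologicalSpace X] [TopologicalSpace Y]
    (I : Set (Set X)) (f : X → Y) :
    (∀ V : Set Y, IsOpen V → f ⁻¹' V ⊆ interior (LocalFun I (f ⁻¹' V))) ↔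
      ((∀ V : Set Y, IsOpen V →
          f ⁻¹' V ⊆ interior (f ⁻¹' V ∪ LocalFun I (f ⁻¹' V))) ∧
        (∀ V : Set Y, IsOpen V → f ⁻¹' V ⊆ LocalFun I (f ⁻¹' V))) := by
  simp only [← forall_and]
  exact forall₂_congr fun _ _ => subset_interior_iff_subset_interior_union_and_subset
end

section
/- In a Hayashi–Samuels space (X = X*), a subset A is open if and only if A is pre-I-open and I-locally closed. -/
/-!
An open set `A` is trivially pre-I-open, and `A = A ∩ X` with `X` ⋆-perfect because `X = X*`.
Conversely, if `A = U ∩ V` with `V* = V`, monotonicity of the local function gives `A* ⊆ V`,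
so `A = U ∩ int (A ∪ A*)` whenever `A ⊆ int (A ∪ A*)`, and the right-hand side is open.
-/

open Set

variable {X : Type*}

theorem localFun_mono [TopologicalSpace X] {I : Set (Set X)} (hI : IsSetIdeal I) {A B : Set X}
    (hAB : A ⊆ B) : LocalFun I A ⊆ LocalFun I B :=
  fun _ hx U hU hxU hUB => hx U hU hxU (hI.2.1 hUB (inter_subset_inter_right U hAB))

theorem IsOpen.subset_interior_union_localFun [TopologicalSpace X] {A : Set X} (hA : IsOpen A)
    (I : Set (Set X)) : A ⊆ interior (A ∪ LocalFun I A) :=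
  hA.subset_interior_iff.mpr subset_union_left

theorem inter_interior_union_localFun_subset [TopologicalSpace X] {I : Set (Set X)}
    (hI : IsSetIdeal I) {V : Set X} (hV : LocalFun I V ⊆ V) (U : Set X) :
    U ∩ interior (U ∩ V ∪ LocalFun I (U ∩ V)) ⊆ U ∩ V := by
  rintro x ⟨hxU, hx⟩
  rcases interior_subset hx with hxUV | hx_local
  · exact hxUV
  · exact ⟨hxU, hV (localFun_mono hI inter_subset_right hx_local)⟩

theorem isOpen_inter_of_subset_interior_union_localFun [TopologicalSpace X] {I : Set (Set X)}
    (hI : IsSetIdeal I) {U V : Set X} (hU : IsOpen U) (hV : LocalFun I V ⊆ V)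
    (hpre : U ∩ V ⊆ interior (U ∩ V ∪ LocalFun I (U ∩ V))) : IsOpen (U ∩ V) := by
  have hUV : U ∩ V = U ∩ interior (U ∩ V ∪ LocalFun I (U ∩ V)) :=
    (subset_inter inter_subset_left hpre).antisymm (inter_interior_union_localFun_subset hI hV U)
  rw [hUV]
  exact hU.inter isOpen_interior

theorem open_iff_preIOpen_and_ILocallyClosed [TopologicalSpace X] (I : Set (Set X))
    (hI : IsSetIdeal I) (hHS : LocalFun I (Set.univ : Set X) = Set.univ) (A : Set X) :
    IsOpen A ↔
      (A ⊆ interior (A ∪ LocalFun I A) ∧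
        ∃ U V : Set X, IsOpen U ∧ LocalFun I V = V ∧ A = U ∩ V) := by
  constructor
  · intro hA
    exact ⟨hA.subset_interior_union_localFun I, A, univ, hA, hHS, (inter_univ A).symm⟩
  · rintro ⟨hpre, U, V, hU, hV, rfl⟩
    exact isOpen_inter_of_subset_interior_union_localFun hI hU hV.le hpre
end
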